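/- Let F be an asymmetric norm on ℝⁿ whose closed unit ball {y : F(y) ≤ 1} is a strictly convex set, let α ∈ ℝⁿ with α ≠ 0, and suppose the function α ↦ F_*(α)² is differentiable at α with gradient g. Then F(g) > 0 and g/F(g) is the unique point of the unit sphere {y : F(y) = 1} at which the function y ↦ ⟨α, y⟩ attains its maximum over the unit sphere. -/

import Mathlib

open scoped RealInnerProductSpace

/-- `ℝⁿ` with the Euclidean inner product. -/
abbrev En (n : ℕ) := EuclideanSpace ℝ (Fin n)

/-- An asymmetric norm on `ℝⁿ`. -/
def IsAsymNorm {n : ℕ} (F : En n → ℝ) : Prop :=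
  (∀ y, 0 ≤ F y) ∧ (∀ y, F y = 0 ↔ y = 0) ∧
  (∀ l : ℝ, 0 < l → ∀ y, F (l • y) = l * F y) ∧
  (∀ y₁ y₂, F (y₁ + y₂) ≤ F y₁ + F y₂)

/-- The dual asymmetric norm `F_*(α) = sup {⟨α, y⟩ : F y ≤ 1}`. -/
noncomputable def dualNorm {n : ℕ} (F : En n → ℝ) (α : En n) : ℝ :=
  sSup ((fun y => ⟪α, y⟫) '' {y | F y ≤ 1})

/-- The subdifferential of `F²` at `y`. -/
def subdiffSq {n : ℕ} (F : En n → ℝ) (y : En n) : Set (En n) :=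
  {α | ∀ z, (F y) ^ 2 + ⟪α, z - y⟫ ≤ (F z) ^ 2}

/-! The maximum of `⟪α, ·⟫` over the unit ball `{F ≤ 1}` is attained, the ball being compact
(`F` is convex, hence continuous, and bounded below by a multiple of the Euclidean norm), at
some `ŷ`; it lies on the sphere because a nonzero linear functional has no interior maximum.
Since `F_*(β) ≥ ⟪β, ŷ⟫` with equality at `β = α`, the vector `2 F_*(α) ŷ` is a subgradient of
`F_*²` at `α`, so it is the gradient `g`; hence `F g = 2 F_*(α) > 0` and `g / F g = ŷ`. A second
maximizer on the sphere would make the midpoint, an interior point of the strictly convex ball,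
a maximizer as well. -/

open Filter Topology InnerProductSpace

section InnerProductSpace

variable {E : Type*} [NormedAddCommGroup E] [InnerProductSpace ℝ E]

theorem eq_zero_of_isMaxOn_inner {s : Set E} {a x : E} (hmax : IsMaxOn (fun y => ⟪a, y⟫) s x)
    (hs : s ∈ 𝓝 x) : a = 0 := by
  have h := (hmax.isLocalMax hs).hasFDerivAt_eq_zero (innerSL ℝ a).hasFDerivAt
  simpa using congr($h a)

theorem StrictConvex.eq_of_isMaxOn_inner {s : Set E} {a x y : E} (hs : StrictConvex ℝ s)
    (ha : a ≠ 0) (hx : x ∈ s) (hy : y ∈ s) (hmax : IsMaxOn (fun z => ⟪a, z⟫) s x)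
    (hxy : ⟪a, y⟫ = ⟪a, x⟫) : y = x := by
  by_contra hne
  have hmid := hs hy hx hne one_half_pos one_half_pos (add_halves 1)
  refine ha (eq_zero_of_isMaxOn_inner (isMaxOn_iff.mpr fun z hz => ?_)
    (mem_interior_iff_mem_nhds.mp hmid))
  simp only [inner_add_right, real_inner_smul_right, hxy]
  linarith [isMaxOn_iff.mp hmax z hz]

theorem HasGradientAt.eq_of_forall_add_inner_le [CompleteSpace E] {f : E → ℝ} {g v x : E}
    (hf : HasGradientAt f g x) (hv : ∀ y, f x + ⟪v, y - x⟫ ≤ f y) : g = v := by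
  have hmin : IsLocalMin (fun y => f y - ⟪v, y⟫) x := Eventually.of_forall fun y => by
    have := hv y
    rw [inner_sub_right] at this
    dsimp only
    linarith
  have h := hmin.hasFDerivAt_eq_zero (hf.hasFDerivAt.sub (toDual ℝ E v).hasFDerivAt)
  exact (toDual ℝ E).injective (sub_eq_zero.mp h)

end InnerProductSpace

theorem dualNorm_eq_inner_of_isMaxOn {n : ℕ} {F : En n → ℝ} {α y : En n} (hy : F y ≤ 1)
    (hmax : IsMaxOn (fun z => ⟪α, z⟫) {z | F z ≤ 1} y) : dualNorm F α = ⟪α, y⟫ :=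
  IsGreatest.csSup_eq ⟨⟨y, hy, rfl⟩, by rintro _ ⟨z, hz, rfl⟩; exact hmax hz⟩

namespace IsAsymNorm

variable {n : ℕ} {F : En n → ℝ}

theorem map_zero (hF : IsAsymNorm F) : F 0 = 0 :=
  (hF.2.1 0).mpr rfl

theorem pos_of_ne_zero (hF : IsAsymNorm F) {y : En n} (hy : y ≠ 0) : 0 < F y :=
  (hF.1 y).lt_of_ne fun h => hy ((hF.2.1 y).mp h.symm)

theorem map_smul_of_nonneg (hF : IsAsymNorm F) {l : ℝ} (hl : 0 ≤ l) (y : En n) :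
    F (l • y) = l * F y := by
  rcases hl.lt_or_eq with hl | rfl
  · exact hF.2.2.1 l hl y
  · rw [zero_smul, zero_mul, hF.map_zero]

theorem map_inv_smul_self (hF : IsAsymNorm F) {y : En n} (hy : y ≠ 0) : F ((F y)⁻¹ • y) = 1 := by
  have hFy := hF.pos_of_ne_zero hy
  rw [hF.map_smul_of_nonneg (inv_nonneg.mpr hFy.le), inv_mul_cancel₀ hFy.ne']

theorem convexOn (hF : IsAsymNorm F) : ConvexOn ℝ Set.univ F := by
  refine ⟨convex_univ, fun x _ y _ a b ha hb _ => ?_⟩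
  rw [smul_eq_mul, smul_eq_mul, ← hF.map_smul_of_nonneg ha, ← hF.map_smul_of_nonneg hb]
  exact hF.2.2.2 _ _

protected theorem continuous (hF : IsAsymNorm F) : Continuous F :=
  continuousOn_univ.mp (hF.convexOn.continuousOn isOpen_univ)

theorem exists_pos_mul_norm_le (hF : IsAsymNorm F) : ∃ c > 0, ∀ y, c * ‖y‖ ≤ F y := by
  obtain ⟨c, hc, hcF⟩ := (isCompact_sphere (0 : En n) 1).exists_forall_le'
    hF.continuous.continuousOn fun y hy => hF.pos_of_ne_zero (ne_zero_of_mem_unit_sphere ⟨y, hy⟩)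
  refine ⟨c, hc, fun y => ?_⟩
  rcases eq_or_ne y 0 with rfl | hy
  · simp [hF.map_zero]
  · have hny : 0 < ‖y‖ := norm_pos_iff.mpr hy
    have hunit : ‖y‖⁻¹ • y ∈ Metric.sphere (0 : En n) 1 := by
      simp [norm_smul, hny.ne']
    calc c * ‖y‖ ≤ F (‖y‖⁻¹ • y) * ‖y‖ := by gcongr; exact hcF _ hunit
      _ = F y := by
        rw [hF.map_smul_of_nonneg (inv_nonneg.mpr hny.le), mul_right_comm,
          inv_mul_cancel₀ hny.ne', one_mul]

theorem isCompact_unitBall (hF : IsAsymNorm F) : IsCompact {y | F y ≤ 1} := by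
  obtain ⟨c, hc, hcF⟩ := hF.exists_pos_mul_norm_le
  refine Metric.isCompact_of_isClosed_isBounded (isClosed_le hF.continuous continuous_const)
    ((Metric.isBounded_closedBall (x := 0) (r := c⁻¹)).subset fun y hy => ?_)
  rw [Metric.mem_closedBall, dist_zero_right, ← one_div, le_div_iff₀' hc]
  exact (hcF y).trans hy

theorem exists_isMaxOn_inner (hF : IsAsymNorm F) (α : En n) :
    ∃ y, F y ≤ 1 ∧ IsMaxOn (fun z => ⟪α, z⟫) {z | F z ≤ 1} y :=
  hF.isCompact_unitBall.exists_isMaxOn ⟨0, by simp [hF.map_zero]⟩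
    (continuous_const.inner continuous_id).continuousOn

theorem le_dualNorm (hF : IsAsymNorm F) (α : En n) {y : En n} (hy : F y ≤ 1) :
    ⟪α, y⟫ ≤ dualNorm F α :=
  le_csSup (hF.isCompact_unitBall.image (continuous_const.inner continuous_id)).bddAbove
    ⟨y, hy, rfl⟩

theorem dualNorm_nonneg (hF : IsAsymNorm F) (α : En n) : 0 ≤ dualNorm F α := by
  simpa using hF.le_dualNorm α (y := 0) (by simp [hF.map_zero])

theorem dualNorm_pos (hF : IsAsymNorm F) {α : En n} (hα : α ≠ 0) : 0 < dualNorm F α :=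
  calc 0 < (F α)⁻¹ * ‖α‖ ^ 2 := by
        have := hF.pos_of_ne_zero hα
        have := norm_pos_iff.mpr hα
        positivity
    _ = ⟪α, (F α)⁻¹ • α⟫ := by rw [real_inner_smul_right, real_inner_self_eq_norm_sq]
    _ ≤ dualNorm F α := hF.le_dualNorm α (hF.map_inv_smul_self hα).le

theorem map_eq_one_of_isMaxOn_inner (hF : IsAsymNorm F) {α y : En n} (hα : α ≠ 0)
    (hy : F y ≤ 1) (hmax : IsMaxOn (fun z => ⟪α, z⟫) {z | F z ≤ 1} y) : F y = 1 := by
  refine hy.eq_of_not_lt fun hlt => hα (eq_zero_of_isMaxOn_inner hmax ?_)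
  exact mem_of_superset ((isOpen_lt hF.continuous continuous_const).mem_nhds hlt)
    fun z (hz : F z < 1) => hz.le

theorem dualNorm_sq_add_inner_le (hF : IsAsymNorm F) {α y : En n} (hy : F y ≤ 1)
    (hmax : IsMaxOn (fun z => ⟪α, z⟫) {z | F z ≤ 1} y) (β : En n) :
    dualNorm F α ^ 2 + ⟪(2 * dualNorm F α) • y, β - α⟫ ≤ dualNorm F β ^ 2 := by
  have hβ := hF.le_dualNorm β hy
  have hα0 := hF.dualNorm_nonneg α
  rw [real_inner_smul_left, real_inner_comm, inner_sub_left, ← dualNorm_eq_inner_of_isMaxOn hy hmax]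
  nlinarith [mul_le_mul_of_nonneg_left hβ hα0, sq_nonneg (dualNorm F β - dualNorm F α)]

theorem eq_smul_of_hasGradientAt_dualNorm_sq (hF : IsAsymNorm F) {α y g : En n} (hy : F y ≤ 1)
    (hmax : IsMaxOn (fun z => ⟪α, z⟫) {z | F z ≤ 1} y)
    (hg : HasGradientAt (fun β => dualNorm F β ^ 2) g α) : g = (2 * dualNorm F α) • y :=
  hg.eq_of_forall_add_inner_le (hF.dualNorm_sq_add_inner_le hy hmax)

end IsAsymNorm

theorem unique_maximizer_on_sphere {n : ℕ} (F : En n → ℝ) (hF : IsAsymNorm F)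
    (hconv : StrictConvex ℝ {y : En n | F y ≤ 1})
    (α : En n) (hα : α ≠ 0) (g : En n)
    (hg : HasGradientAt (fun β => (dualNorm F β) ^ 2) g α) :
    0 < F g ∧ F ((F g)⁻¹ • g) = 1 ∧
      (∀ y, F y = 1 → ⟪α, y⟫ ≤ ⟪α, (F g)⁻¹ • g⟫) ∧
      (∀ y, F y = 1 → ⟪α, y⟫ = ⟪α, (F g)⁻¹ • g⟫ → y = (F g)⁻¹ • g) := by
  obtain ⟨y, hyB, hmax⟩ := hF.exists_isMaxOn_inner α
  have hy : F y = 1 := hF.map_eq_one_of_isMaxOn_inner hα hyB hmax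
  have hM : 0 < 2 * dualNorm F α := mul_pos two_pos (hF.dualNorm_pos hα)
  have hgy : g = (2 * dualNorm F α) • y := hF.eq_smul_of_hasGradientAt_dualNorm_sq hyB hmax hg
  have hFg : F g = 2 * dualNorm F α := by rw [hgy, hF.map_smul_of_nonneg hM.le, hy, mul_one]
  have hyg : (F g)⁻¹ • g = y := by rw [hFg, hgy, inv_smul_smul₀ hM.ne']
  rw [hyg]
  exact ⟨hFg ▸ hM, hy, fun z hz => hmax hz.le,
    fun z hz heq => hconv.eq_of_isMaxOn_inner hα hyB hz.le hmax heq⟩
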